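/- arXiv:2009.12802 — 4 statements merged into one kernel-verified Lean document; each statement's English description precedes it below -/
import Mathlib

section
/- If a connected graph G has a vertex of degree one, then G does not have the strong parity property. -/
open scoped Classical

def StrongParityProperty {V : Type*} [Fintype V] (G : SimpleGraph V) : Prop :=
  ∀ X : Finset V, Even X.card →
    ∃ F : SimpleGraph V, F ≤ G ∧ (∀ v : V, 1 ≤ F.degree v) ∧
      (∀ v ∈ X, Odd (F.degree v)) ∧ (∀ v ∉ X, Even (F.degree v))

theorem degree_one_no_strong_parity {V : Type*} [Fintype V] (G : SimpleGraph V)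
    (hconn : G.Connected) (u : V) (hu : G.degree u = 1) :
    ¬ StrongParityProperty G := by
  intro h
  obtain ⟨F, hFG, hmin, _, heven⟩ := h ∅ (by simp)
  have hsub : F.neighborFinset u ⊆ G.neighborFinset u := fun v hv => by
    rw [SimpleGraph.mem_neighborFinset] at hv ⊢
    exact hFG hv
  have hle : F.degree u ≤ 1 := hu ▸ Finset.card_le_card hsub
  have h1 : F.degree u = 1 := le_antisymm hle (hmin u)
  have := heven u (by simp)
  rw [h1] at this
  exact (Nat.not_even_one) this
end

section
/- If a graph G has the strong parity property, then G is connected and has minimum degree at least 2. -/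
/-!
With `X = ∅` the property yields a spanning subgraph all of whose degrees are even and
positive, hence at least `2`. With `X = {u, v}` it yields a subgraph `F` in which `u` and `v`
are the only vertices of odd degree; the handshaking lemma, applied to the component of `u`
in `F`, forces a second odd vertex into that component, so it contains `v`.
-/

open scoped Classical

namespace SimpleGraph

variable {V : Type*} [Fintype V]

theorem exists_reachable_ne_odd_degree (F : SimpleGraph V) [DecidableRel F.Adj] {u : V}
    (hu : Odd (F.degree u)) : ∃ w, w ≠ u ∧ F.Reachable u w ∧ Odd (F.degree w) := by
  set C := F.connectedComponentMk u
  have hdeg (v : C.supp) : (F.induce C.supp).degree v = F.degree v :=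
    degree_induce_of_neighborSet_subset fun w hw => (C.mem_supp_congr_adj hw).mp v.2
  obtain ⟨w, hwu, hw⟩ := (F.induce C.supp).exists_ne_odd_degree_of_exists_odd_degree
    ⟨u, ConnectedComponent.connectedComponentMk_mem⟩ (by rwa [hdeg])
  refine ⟨w, fun h => hwu (Subtype.ext h), ?_, by rwa [← hdeg]⟩
  exact (ConnectedComponent.eq.mp ((C.mem_supp_iff w).mp w.2)).symm

end SimpleGraph

namespace StrongParityProperty

variable {V : Type*} [Fintype V] {G : SimpleGraph V}

theorem two_le_degree (h : StrongParityProperty G) (v : V) : 2 ≤ G.degree v := by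
  obtain ⟨F, hFG, hpos, -, heven⟩ := h ∅ (by simp)
  obtain ⟨k, hk⟩ := heven v (Finset.notMem_empty v)
  have hle := SimpleGraph.degree_le_of_le (v := v) hFG
  have := hpos v
  omega

theorem preconnected (h : StrongParityProperty G) : G.Preconnected := by
  intro u v
  obtain rfl | huv := eq_or_ne u v
  · rfl
  obtain ⟨F, hFG, -, hodd, heven⟩ := h {u, v} (by simp [Finset.card_pair huv])
  obtain ⟨w, hwu, hreach, hw⟩ :=
    F.exists_reachable_ne_odd_degree (hodd u (Finset.mem_insert_self u {v}))
  obtain rfl : w = v := by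
    by_contra hwv
    exact Nat.not_even_iff_odd.mpr hw (heven w (by simp [hwu, hwv]))
  exact hreach.mono hFG

end StrongParityProperty

theorem strong_parity_connected_min_degree {V : Type*} [Fintype V] (G : SimpleGraph V)
    (hcard : 2 ≤ Fintype.card V) (h : StrongParityProperty G) :
    G.Connected ∧ ∀ v : V, 2 ≤ G.degree v :=
  have : Nonempty V := Fintype.card_pos_iff.mp (by omega)
  ⟨⟨h.preconnected⟩, h.two_le_degree⟩
end

section
/- Let G be a graph and suppose there exists T ⊆ V(G) with T ∩ X = ∅ for some even set X such that, taking g(v) = −1 for v ∈ X and g(v) = 2 otherwise, and f(v) ≥ deg_G(v) for all v, the quantity −g(T) + (sum over x∈T of deg_G(x)) − c(G−T) ≤ −2 holds with T meeting no vertex of X. Then G contains no spanning subgraph F with d_F(v) odd for v ∈ X, d_F(v) even for v ∉ X, and d_F(v) ≥ 1 for all v. Equivalently: if there is T ⊆ V(G) with (sum over x∈T of deg_G(x)) − 2|T| − c(G−T) ≤ −2, then G does not have the strong parity property. -/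
open scoped Classical

noncomputable def numComponents {V : Type*} [Fintype V] (G : SimpleGraph V) (T : Finset V) : ℕ :=
  Nat.card (G.induce ((↑T : Set V)ᶜ)).ConnectedComponent

/-!
Let `c` be the number of components of `G - T`, and `e_H(C, T)` the number of edges of `H` between
a component `C` and `T`. Choose `X` with one vertex in each component `C` for which `e_G(C, T)` is
even, leaving out one such component if needed to make `|X|` even. If `F` is a spanning subgraph
whose odd-degree vertices are exactly `X`, handshaking inside `C` gives `e_F(C, T) ≡ |C ∩ X|`
(mod 2), so `e_F(C, T) < e_G(C, T)` for all components but at most one. As every vertex of `T`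
has positive even `F`-degree, `2|T| ≤ ∑_{x ∈ T} d_F(x) ≤ ∑_{x ∈ T} d_G(x) - (c - 1)`.
-/

open Finset Function SimpleGraph

theorem Finset.card_le_sum_add_card_filter_eq_zero {ι : Type*} (s : Finset ι) (f : ι → ℕ) :
    #s ≤ ∑ i ∈ s, f i + #{i ∈ s | f i = 0} := by
  have hpos : #{i ∈ s | ¬f i = 0} ≤ ∑ i ∈ s, f i :=
    calc #{i ∈ s | ¬f i = 0} = ∑ i ∈ s with ¬f i = 0, 1 := card_eq_sum_ones _
      _ ≤ ∑ i ∈ s with ¬f i = 0, f i := sum_le_sum fun i hi => by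
          have := (mem_filter.mp hi).2; omega
      _ ≤ ∑ i ∈ s, f i := sum_le_sum_of_subset (filter_subset _ _)
  have := card_filter_add_card_filter_not (s := s) (fun i => f i = 0)
  omega

theorem Finset.exists_even_card_subset_card_sdiff_le_one {α : Type*} (P : Finset α) :
    ∃ Q ⊆ P, Even #Q ∧ #(P \ Q) ≤ 1 := by
  by_cases hP : Even #P
  · exact ⟨P, Subset.rfl, hP, by simp⟩
  · obtain ⟨i, hi⟩ : P.Nonempty := nonempty_iff_ne_empty.mpr fun h => hP (by simp [h])
    refine ⟨P.erase i, erase_subset i P, ?_, ?_⟩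
    · rw [card_erase_of_mem hi]
      exact Nat.Odd.sub_odd (Nat.not_even_iff_odd.mp hP) odd_one
    · rw [sdiff_erase_self hi, card_singleton]

theorem exists_even_card_with_prescribed_inter_parity {ι V : Type*} [Fintype ι]
    (S : ι → Finset V) (hne : ∀ i, (S i).Nonempty) (hdisj : Pairwise (Disjoint on S))
    (p : ι → Prop) :
    ∃ X : Finset V, Even #X ∧ X ⊆ univ.biUnion S ∧ #{i | ¬(Odd #(S i ∩ X) ↔ p i)} ≤ 1 := by
  choose r hr using hne
  have hr_inj : r.Injective := fun i j hij =>
    hdisj.eq (not_disjoint_iff.mpr ⟨r i, hr i, hij ▸ hr j⟩)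
  obtain ⟨Q, hQP, hQ, hPQ⟩ := exists_even_card_subset_card_sdiff_le_one {i | p i}
  have hinter : ∀ i, S i ∩ Q.image r = if i ∈ Q then {r i} else ∅ := by
    intro i
    ext v
    simp only [mem_inter, mem_image]
    constructor
    · rintro ⟨hv, j, hj, rfl⟩
      obtain rfl : j = i := hdisj.eq (not_disjoint_iff.mpr ⟨r j, hr j, hv⟩)
      simp [hj]
    · split_ifs with hi <;> simp only [mem_singleton, notMem_empty, IsEmpty.forall_iff]
      rintro rfl
      exact ⟨hr i, i, hi, rfl⟩
  refine ⟨Q.image r, ?_, ?_, le_trans (card_le_card fun i => ?_) hPQ⟩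
  · rwa [card_image_of_injective Q hr_inj]
  · exact fun v hv => by
      obtain ⟨i, -, rfl⟩ := mem_image.mp hv
      exact mem_biUnion.mpr ⟨i, mem_univ i, hr i⟩
  · have := @hQP i
    by_cases hi : i ∈ Q <;> simp_all

namespace SimpleGraph

variable {V : Type*} (H : SimpleGraph V) [DecidableRel H.Adj]

theorem card_interedges_eq_sum_card_filter_adj (s t : Finset V) :
    #(H.interedges s t) = ∑ v ∈ s, #{w ∈ t | H.Adj v w} := by
  simp only [interedges_def, card_filter, sum_product]

theorem card_interedges_add_card_interedges_sdiff {F G : SimpleGraph V} [DecidableRel F.Adj]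
    [DecidableRel G.Adj] (h : F ≤ G) (s t : Finset V) :
    #(F.interedges s t) + #((G \ F).interedges s t) = #(G.interedges s t) := by
  rw [← card_filter_add_card_filter_not (s := G.interedges s t) (fun e => F.Adj e.1 e.2)]
  congr 2 <;> ext ⟨v, w⟩ <;> simp only [mem_filter, mk_mem_interedges_iff, sdiff_adj]
  · exact ⟨fun ⟨hv, hw, hF⟩ => ⟨⟨hv, hw, h hF⟩, hF⟩, fun ⟨⟨hv, hw, _⟩, hF⟩ => ⟨hv, hw, hF⟩⟩
  · tauto

variable [Fintype V]

theorem sum_degree_eq_card_interedges_univ (s : Finset V) :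
    ∑ v ∈ s, H.degree v = #(H.interedges s univ) := by
  rw [card_interedges_eq_sum_card_filter_adj]
  refine sum_congr rfl fun v _ => ?_
  rw [← card_neighborFinset_eq_degree, neighborFinset_eq_filter]

theorem even_card_interedges_self (s : Finset V) : Even #(H.interedges s s) := by
  let H' := ((⊤ : H.Subgraph).induce s).spanningCoe
  have : H.interedges s s = H'.interedges univ univ := by
    ext ⟨v, w⟩
    simp [mk_mem_interedges_iff, H']
  rw [this, ← sum_degree_eq_card_interedges_univ, sum_degrees_eq_twice_card_edges]
  exact even_two_mul _

theorem even_card_interedges_iff_even_sum_degree {S T : Finset V} (hST : Disjoint S T)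
    (hS : ∀ v ∈ S, ∀ w, H.Adj v w → w ∈ S ∨ w ∈ T) :
    Even #(H.interedges S T) ↔ Even (∑ v ∈ S, H.degree v) := by
  have hsplit : H.interedges S univ = H.interedges S S ∪ H.interedges S T := by
    ext ⟨v, w⟩
    simp only [mem_union, mk_mem_interedges_iff, mem_univ, true_and]
    exact ⟨fun ⟨hv, hvw⟩ => (hS v hv w hvw).imp (⟨hv, ·, hvw⟩) (⟨hv, ·, hvw⟩),
      fun h => h.elim (fun h => ⟨h.1, h.2.2⟩) (fun h => ⟨h.1, h.2.2⟩)⟩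
  rw [sum_degree_eq_card_interedges_univ, hsplit,
    card_union_of_disjoint (H.interedges_disjoint_right S hST), Nat.even_add,
    iff_true_left (H.even_card_interedges_self S)]

theorem sum_card_interedges_le_card_interedges_univ {ι : Type*} (s : Finset ι)
    (S : ι → Finset V) (hS : (s : Set ι).PairwiseDisjoint S) (t : Finset V) :
    ∑ i ∈ s, #(H.interedges (S i) t) ≤ #(H.interedges t univ) := by
  have := H.symm
  rw [← card_biUnion fun i hi j hj hij => H.interedges_disjoint_left (hS hi hj hij) t,
    ← interedges_biUnion_left, interedges, Rel.card_interedges_comm]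
  exact card_le_card (H.interedges_mono Subset.rfl (subset_univ _))

end SimpleGraph

namespace SimpleGraph.ConnectedComponent

variable {V : Type*} [Fintype V] {G : SimpleGraph V} {s : Set V}

noncomputable def valSupp (K : (G.induce s).ConnectedComponent) : Finset V :=
  {v | ∃ h : v ∈ s, (G.induce s).connectedComponentMk ⟨v, h⟩ = K}

theorem mem_valSupp {K : (G.induce s).ConnectedComponent} {v : V} :
    v ∈ K.valSupp ↔ ∃ h : v ∈ s, (G.induce s).connectedComponentMk ⟨v, h⟩ = K := by
  simp [valSupp]

theorem valSupp_nonempty (K : (G.induce s).ConnectedComponent) : K.valSupp.Nonempty := by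
  induction K using ConnectedComponent.ind with
  | h v => exact ⟨v, mem_valSupp.mpr ⟨v.2, rfl⟩⟩

theorem disjoint_valSupp {K K' : (G.induce s).ConnectedComponent} (hKK' : K ≠ K') :
    Disjoint K.valSupp K'.valSupp := by
  refine Finset.disjoint_left.mpr fun v hv hv' => ?_
  obtain ⟨h, rfl⟩ := mem_valSupp.mp hv
  obtain ⟨_, rfl⟩ := mem_valSupp.mp hv'
  exact hKK' rfl

theorem mem_of_mem_valSupp {K : (G.induce s).ConnectedComponent} {v : V} (hv : v ∈ K.valSupp) :
    v ∈ s :=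
  (mem_valSupp.mp hv).1

theorem mem_valSupp_of_adj {K : (G.induce s).ConnectedComponent} {v w : V}
    (hv : v ∈ K.valSupp) (hvw : G.Adj v w) (hw : w ∈ s) : w ∈ K.valSupp := by
  obtain ⟨h, rfl⟩ := mem_valSupp.mp hv
  exact mem_valSupp.mpr ⟨hw, (connectedComponentMk_eq_of_adj (by simpa using hvw)).symm⟩

end SimpleGraph.ConnectedComponent

theorem StrongParityProperty.two_mul_card_add_card_le {V ι : Type*} [Fintype V] [Fintype ι]
    {G : SimpleGraph V} (hG : StrongParityProperty G) (T : Finset V) (S : ι → Finset V)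
    (hne : ∀ i, (S i).Nonempty) (hdisj : Pairwise (Disjoint on S))
    (hST : ∀ i, Disjoint (S i) T) (hclosed : ∀ i, ∀ v ∈ S i, ∀ w, G.Adj v w → w ∈ S i ∨ w ∈ T) :
    2 * #T + Fintype.card ι ≤ ∑ x ∈ T, G.degree x + 1 := by
  obtain ⟨X, hXeven, hXS, hbad⟩ := exists_even_card_with_prescribed_inter_parity S hne hdisj
    (fun i => Even #(G.interedges (S i) T))
  obtain ⟨F, hFG, hF1, hFodd, hFeven⟩ := hG X hXeven
  have hFodd_iff : ∀ v, Odd (F.degree v) ↔ v ∈ X := fun v => by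
    by_cases hv : v ∈ X
    · exact iff_of_true (hFodd v hv) hv
    · exact iff_of_false (Nat.not_odd_iff_even.mpr (hFeven v hv)) hv
  have hFpar : ∀ i, Even #(F.interedges (S i) T) ↔ Even #(S i ∩ X) := fun i => by
    rw [F.even_card_interedges_iff_even_sum_degree (hST i) fun v hv w h => hclosed i v hv w (hFG h),
      even_sum_iff_even_card_odd, ← filter_mem_eq_inter]
    simp only [hFodd_iff]
  have hsplit := fun s t => card_interedges_add_card_interedges_sdiff hFG s t
  have hslack : #{i | #((G \ F).interedges (S i) T) = 0} ≤ 1 := by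
    refine (card_le_card fun i hi => ?_).trans hbad
    have hFG_eq : #(F.interedges (S i) T) = #(G.interedges (S i) T) := by
      simpa [(mem_filter.mp hi).2] using hsplit (S i) T
    simp [← hFG_eq, ← Nat.not_even_iff_odd, hFpar i]
  have hT : ∀ x ∈ T, 2 ≤ F.degree x := fun x hx => by
    have hxX : x ∉ X := fun hxX => by
      obtain ⟨i, -, hxi⟩ := mem_biUnion.mp (hXS hxX)
      exact disjoint_left.mp (hST i) hxi hx
    obtain ⟨k, hk⟩ := hFeven x hxX
    have := hF1 x
    omega
  calc 2 * #T + Fintype.card ι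
      ≤ ∑ x ∈ T, F.degree x + (∑ i, #((G \ F).interedges (S i) T) + 1) := by
        gcongr
        · rw [mul_comm, ← smul_eq_mul, ← sum_const]
          exact sum_le_sum hT
        · exact (card_le_sum_add_card_filter_eq_zero univ _).trans (by gcongr)
    _ ≤ ∑ x ∈ T, F.degree x + (#((G \ F).interedges T univ) + 1) := by
        gcongr
        exact (G \ F).sum_card_interedges_le_card_interedges_univ univ S
          (fun i _ j _ hij => hdisj hij) T
    _ = ∑ x ∈ T, G.degree x + 1 := by
        rw [← add_assoc, sum_degree_eq_card_interedges_univ,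
          hsplit, sum_degree_eq_card_interedges_univ]

open SimpleGraph.ConnectedComponent in
theorem deficiency_implies_no_strong_parity {V : Type*} [Fintype V] (G : SimpleGraph V)
    (T : Finset V)
    (hT : (∑ x ∈ T, (G.degree x : ℤ)) - 2 * T.card - numComponents G T ≤ -2) :
    ¬ StrongParityProperty G := by
  intro hG
  have key := hG.two_mul_card_add_card_le T
    (fun K : (G.induce (↑T : Set V)ᶜ).ConnectedComponent => K.valSupp) valSupp_nonempty
    (fun _ _ => disjoint_valSupp) (fun _ => Finset.disjoint_left.mpr fun _ => mem_of_mem_valSupp)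
    (fun _ _ hv w hvw => (em (w ∈ T)).symm.imp (mem_valSupp_of_adj hv hvw) id)
  rw [← Nat.card_eq_fintype_card] at key
  have := (Nat.cast_le (α := ℤ)).mpr key
  push_cast at this
  unfold numComponents at hT
  omega
end

section
/- Let G be a graph and g, f integer-valued functions on V(G) with g(v) ≡ f(v) (mod 2) for all v. Suppose for disjoint S, T ⊆ V(G) the quantity η(S,T) = f(S) − g(T) + Σ_{x∈T} d_{G−S}(x) − q(S,T) satisfies η(S,T) ≤ −2, where q(S,T) counts components C of G−S−T with g(V(C)) + e_G(V(C),T) odd, and suppose f(v) ≤ d_G(v) for some v ∈ S. Then for S' = S − v, η(S',T) ≤ η(S,T) + (d_G(v) − f(v)). -/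
open scoped Classical

/-- Degree of `x` in `G - S`, i.e. the number of neighbors of `x` outside `S`. -/
noncomputable def degOutside {V : Type*} [Fintype V] (G : SimpleGraph V) (S : Finset V) (x : V) : ℕ :=
  ((G.neighborFinset x) \ S).card

/-- The vertex set (as a finset of `V`) of a connected component of the subgraph of `G`
induced on `W`. -/
noncomputable def compSupp {V : Type*} [Fintype V] (G : SimpleGraph V) (W : Set V)
    (c : (G.induce W).ConnectedComponent) : Finset V :=
  Finset.univ.filter fun v => ∃ h : v ∈ W, (G.induce W).connectedComponentMk ⟨v, h⟩ = c

/-- `eBetween G U T` is the number of edges of `G` joining `U` to `T`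
(counted as pairs `(t, u)` with `t ∈ T`, `u ∈ U`, `t ~ u`). -/
noncomputable def eBetween {V : Type*} [Fintype V] (G : SimpleGraph V) (U T : Finset V) : ℕ :=
  ∑ t ∈ T, ((G.neighborFinset t).filter (· ∈ U)).card

/-- `qOdd G g S T` is the number of components `C` of `G - S - T` with
`g(V(C)) + e_G(V(C), T)` odd. -/
noncomputable def qOdd {V : Type*} [Fintype V] (G : SimpleGraph V) (g : V → ℤ)
    (S T : Finset V) : ℕ :=
  Nat.card {c : (G.induce ((↑(S ∪ T) : Set V)ᶜ)).ConnectedComponent //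
    Odd ((∑ x ∈ compSupp G ((↑(S ∪ T) : Set V)ᶜ) c, g x) +
      (eBetween G (compSupp G ((↑(S ∪ T) : Set V)ᶜ) c) T : ℤ))}

/-- `eta G g f S T = f(S) - g(T) + Σ_{x ∈ T} d_{G-S}(x) - q(S,T)`. -/
noncomputable def eta {V : Type*} [Fintype V] (G : SimpleGraph V) (g f : V → ℤ)
    (S T : Finset V) : ℤ :=
  (∑ x ∈ S, f x) - (∑ x ∈ T, g x) + (∑ x ∈ T, (degOutside G S x : ℤ)) - qOdd G g S T

/-!
Putting `v` back into the graph lowers `f(S)` by `f v` and raises `∑_{x ∈ T} d_{G-S}(x)` by the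
number of neighbours of `v` in `T`. In `G - (S - v) - T` the vertex `v` only merges the components
of `G - S - T` that contain one of its neighbours; every other component survives with the same
vertex set, hence with the same parity. So `q` drops by at most the number of neighbours of `v`
outside `S ∪ T`, and the two neighbour counts add up to at most `d_G(v)`.
-/

open Finset

namespace SimpleGraph

variable {V : Type*} (G : SimpleGraph V) {W : Set V} {v : V}

theorem connectedComponentMk_eq_of_walk_induce_insert {c : (G.induce W).ConnectedComponent}
    (hc : ∀ u (hu : u ∈ W), G.Adj v u → (G.induce W).connectedComponentMk ⟨u, hu⟩ ≠ c) :
    ∀ {a b : ↥(insert v W)} (_ : (G.induce (insert v W)).Walk a b) (ha : (a : V) ∈ W),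
      (G.induce W).connectedComponentMk ⟨a, ha⟩ = c →
      ∃ hb : (b : V) ∈ W, (G.induce W).connectedComponentMk ⟨b, hb⟩ = c := by
  intro a b p
  induction p with
  | nil => exact fun ha hac => ⟨ha, hac⟩
  | @cons x z y hxz _ ih =>
    intro hx hxc
    have hxz : G.Adj x z := by simpa using hxz
    obtain hzv | hz := z.2
    · rw [hzv] at hxz
      exact absurd hxc (hc x hx hxz.symm)
    · have hzx : (G.induce W).Adj ⟨z, hz⟩ ⟨x, hx⟩ := by simpa using hxz.symm
      exact ih hz ((ConnectedComponent.sound hzx.reachable).trans hxc)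

variable [Fintype V]

theorem compSupp_injective : Function.Injective (compSupp G W) := by
  intro c₁ c₂ h
  induction c₁ using ConnectedComponent.ind with | h x => ?_
  have hx : (x : V) ∈ compSupp G W ((G.induce W).connectedComponentMk x) := by
    simp [compSupp]
  rw [h] at hx
  simpa [compSupp] using hx

theorem compSupp_map_induceHomOfLE {c : (G.induce W).ConnectedComponent}
    (hc : ∀ u (hu : u ∈ W), G.Adj v u → (G.induce W).connectedComponentMk ⟨u, hu⟩ ≠ c) :
    compSupp G (insert v W) (c.map (induceHomOfLE G (Set.subset_insert v W)).toHom) =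
      compSupp G W c := by
  induction c using ConnectedComponent.ind with | h x => ?_
  ext u
  simp only [compSupp, mem_filter, mem_univ, true_and]
  rw [ConnectedComponent.map_mk]
  constructor
  · rintro ⟨hu, hux⟩
    obtain ⟨p⟩ := ConnectedComponent.exact hux.symm
    exact connectedComponentMk_eq_of_walk_induce_insert G hc p x.2 rfl
  · rintro ⟨hu, hux⟩
    refine ⟨Set.mem_insert_of_mem v hu, ConnectedComponent.sound ?_⟩
    exact (ConnectedComponent.exact hux).map (induceHomOfLE G (Set.subset_insert v W)).toHom

theorem card_components_le_card_components_insert_add (P : Finset V → Prop) :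
    Nat.card {c : (G.induce W).ConnectedComponent // P (compSupp G W c)} ≤
      Nat.card {c : (G.induce (insert v W)).ConnectedComponent //
        P (compSupp G (insert v W) c)} + #{u ∈ G.neighborFinset v | u ∈ W} := by
  set φ := (induceHomOfLE G (Set.subset_insert v W)).toHom
  set touched := ((G.neighborFinset v).subtype (· ∈ W)).image (G.induce W).connectedComponentMk
  have hsupp : ∀ c ∉ touched, compSupp G (insert v W) (c.map φ) = compSupp G W c := by
    refine fun c hc => compSupp_map_induceHomOfLE G fun u hu huv huc => hc ?_
    exact mem_image.2 ⟨⟨u, hu⟩, by simpa using huv, huc⟩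
  have hmaps : Set.MapsTo (ConnectedComponent.map φ)
      {c | P (compSupp G W c) ∧ c ∉ touched} {c | P (compSupp G (insert v W) c)} :=
    fun c ⟨hP, hc⟩ => by simpa [hsupp c hc] using hP
  have hinj : Set.InjOn (ConnectedComponent.map φ) {c | P (compSupp G W c) ∧ c ∉ touched} :=
    fun c₁ h₁ c₂ h₂ h =>
      compSupp_injective G <| by rw [← hsupp c₁ h₁.2, ← hsupp c₂ h₂.2, h]
  simp only [Nat.card_eq_fintype_card, Fintype.card_subtype]
  calc #{c | P (compSupp G W c)}
      = #{c | P (compSupp G W c) ∧ c ∉ touched} +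
          #{c | P (compSupp G W c) ∧ c ∈ touched} := by
        rw [← card_filter_add_card_filter_not (s := {c | P (compSupp G W c)}) (· ∉ touched),
          filter_filter, filter_filter]
        simp
    _ ≤ #{c | P (compSupp G (insert v W) c)} + #touched := by
        gcongr
        · exact card_le_card_of_injOn _ (by simpa using hmaps) (by simpa using hinj)
        · intro c; simp
    _ ≤ _ := by
        gcongr
        exact card_image_le.trans (card_subtype _ _).le

end SimpleGraph

section

variable {V : Type*} [Fintype V] (G : SimpleGraph V)

theorem qOdd_le_qOdd_erase_add (g : V → ℤ) (S T : Finset V) (v : V) :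
    qOdd G g S T ≤ qOdd G g (S.erase v) T + #(G.neighborFinset v \ (S ∪ T)) := by
  by_cases hvT : v ∈ T
  · have : S.erase v ∪ T = S ∪ T := by
      ext x
      by_cases hx : x = v <;> simp [hx, hvT]
    unfold qOdd
    rw [this]
    exact Nat.le_add_right _ _
  have hW : (↑(S.erase v ∪ T) : Set V)ᶜ = insert v (↑(S ∪ T) : Set V)ᶜ := by
    ext x
    by_cases hx : x = v
    · simp [hx, hvT]
    · simp [hx]
  have hnbr : G.neighborFinset v \ (S ∪ T) =
      {u ∈ G.neighborFinset v | u ∈ (↑(S ∪ T) : Set V)ᶜ} := by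
    ext; simp
  unfold qOdd
  rw [hW, hnbr]
  convert G.card_components_le_card_components_insert_add
    fun s => Odd ((∑ x ∈ s, g x) + (eBetween G s T : ℤ))

theorem degOutside_erase {S : Finset V} {v : V} (hvS : v ∈ S) (x : V) :
    degOutside G (S.erase v) x = degOutside G S x + if G.Adj v x then 1 else 0 := by
  unfold degOutside
  by_cases hvx : G.Adj v x
  · have hv : v ∈ G.neighborFinset x := by simpa using hvx.symm
    rw [sdiff_erase hv, card_insert_of_notMem (by simp [hvS]), if_pos hvx]
  · have : G.neighborFinset x \ S.erase v = G.neighborFinset x \ S := by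
      ext y
      by_cases hy : y = v
      · simp [hy, hvS, G.adj_comm, hvx]
      · simp [hy]
    rw [this, if_neg hvx, add_zero]

theorem sum_degOutside_erase {S : Finset V} {v : V} (hvS : v ∈ S) (T : Finset V) :
    ∑ x ∈ T, (degOutside G (S.erase v) x : ℤ) =
      ∑ x ∈ T, (degOutside G S x : ℤ) + #{x ∈ T | G.Adj v x} := by
  simp only [degOutside_erase G hvS, Nat.cast_add, sum_add_distrib, Nat.cast_ite, Nat.cast_one,
    Nat.cast_zero, sum_boole]

theorem card_neighborFinset_sdiff_add_card_filter_adj_le {v : V} {T U : Finset V} (hTU : T ⊆ U) :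
    #(G.neighborFinset v \ U) + #{x ∈ T | G.Adj v x} ≤ G.degree v := by
  have hT : {x ∈ T | G.Adj v x} ⊆ G.neighborFinset v ∩ U := fun x hx => by
    simp only [mem_filter] at hx
    simpa using ⟨hx.2, hTU hx.1⟩
  calc _ ≤ #(G.neighborFinset v \ U) + #(G.neighborFinset v ∩ U) :=
        Nat.add_le_add_left (card_le_card hT) _
    _ = G.degree v := by rw [card_sdiff_add_card_inter, G.card_neighborFinset_eq_degree]

end

theorem eta_erase_bound_general {V : Type*} [Fintype V] (G : SimpleGraph V) (g f : V → ℤ)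
    (S T : Finset V)
    (v : V) (hv : v ∈ S) :
    eta G g f (S.erase v) T ≤ eta G g f S T + ((G.degree v : ℤ) - f v) := by
  have hq := qOdd_le_qOdd_erase_add G g S T v
  have hdeg : #(G.neighborFinset v \ (S ∪ T)) + #{x ∈ T | G.Adj v x} ≤ G.degree v :=
    card_neighborFinset_sdiff_add_card_filter_adj_le G subset_union_right
  rw [eta, eta, sum_erase_eq_sub hv, sum_degOutside_erase G hv]
  omega

theorem eta_erase_bound {V : Type*} [Fintype V] (G : SimpleGraph V) (g f : V → ℤ)
    (hpar : ∀ u : V, g u % 2 = f u % 2)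
    (S T : Finset V) (hST : Disjoint S T)
    (v : V) (hv : v ∈ S) (hfv : f v ≤ G.degree v)
    (heta : eta G g f S T ≤ -2) :
    eta G g f (S.erase v) T ≤ eta G g f S T + ((G.degree v : ℤ) - f v) :=
  eta_erase_bound_general G g f S T v hv
end
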